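/- Let W : SL(2) → ℝ be objective and isotropic, and let φ : [0,∞) → ℝ be the unique function with W(F) = φ(λmax(F) − 1/λmax(F)) for all F ∈ SL(2). Then W is polyconvex if and only if φ is nondecreasing and convex on [0,∞). -/

import Mathlib

/-!
On `SL(2)` the quantity `λmax − 1/λmax` is the Euclidean norm of the linear image
`(F₀₀ − F₁₁, F₀₁ + F₁₀)` of `F`, since `(λmax − 1/λmax)² = |F|² − 2 = |F|² − 2 det F`; hence
`W F = φ ‖A F‖` with `A` linear. If `φ` is nondecreasing and convex on `[0,∞)`, then `φ ∘ ‖A ·‖`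
is convex on all matrices, and extending it by `+∞` off the hyperplane `δ = 1` of pairs `(F, δ)`
gives the convex function `P`. Conversely, the shears `!![1, t; 0, 1]` form an affine line in `SL(2)`, along which
`P` equals `φ |t|`; an even convex function of `t` is convex and nondecreasing on `[0,∞)`.
-/

open Matrix

/-- The largest singular value of a real 2×2 matrix `F`, i.e. the square root of
the largest eigenvalue of `FᵀF`. -/
noncomputable def lambdaMax (F : Matrix (Fin 2) (Fin 2) ℝ) : ℝ :=
  Real.sqrt (((Fᵀ * F).trace + Real.sqrt ((Fᵀ * F).trace ^ 2 - 4 * (Fᵀ * F).det)) / 2)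

/-- Convexity for extended-real-valued functions on `ℝ^{2×2} × ℝ`. -/
def ConvexEReal (P : Matrix (Fin 2) (Fin 2) ℝ × ℝ → EReal) : Prop :=
  ∀ x y : Matrix (Fin 2) (Fin 2) ℝ × ℝ, ∀ a b : ℝ, 0 ≤ a → 0 ≤ b → a + b = 1 →
    P (a • x + b • y) ≤ (a : EReal) * P x + (b : EReal) * P y

/-- Polyconvexity on `SL(2)` in the sense of Mielke: the extension of `W` by
`+∞` outside `SL(2)` is a convex function of `(F, det F)`. -/
def PolyconvexSL (W : Matrix (Fin 2) (Fin 2) ℝ → ℝ) : Prop :=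
  ∃ P : Matrix (Fin 2) (Fin 2) ℝ × ℝ → EReal, ConvexEReal P ∧
    ∀ F : Matrix (Fin 2) (Fin 2) ℝ,
      (if F.det = 1 then (W F : EReal) else ⊤) = P (F, F.det)

open Set

lemma ConvexOn.comp_of_monotoneOn {E : Type*} [AddCommGroup E] [Module ℝ E] {s : Set E}
    {t : Set ℝ} {f : E → ℝ} {g : ℝ → ℝ} (hg : ConvexOn ℝ t g) (hg_mono : MonotoneOn g t)
    (hf : ConvexOn ℝ s f) (hst : MapsTo f s t) : ConvexOn ℝ s (g ∘ f) :=
  ⟨hf.1, fun _ hx _ hy _ _ ha hb hab =>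
    (hg_mono (hst (hf.1 hx hy ha hb hab)) (hg.1 (hst hx) (hst hy) ha hb hab)
      (hf.2 hx hy ha hb hab)).trans (hg.2 (hst hx) (hst hy) ha hb hab)⟩

lemma monotoneOn_Ici_of_convexOn_comp_abs {φ : ℝ → ℝ} (hφ : ConvexOn ℝ univ (φ ∘ abs)) :
    MonotoneOn φ (Ici 0) := by
  intro s hs t _ hst
  have hmem : s ∈ Icc (-t) t := ⟨by linarith [mem_Ici.1 hs], hst⟩
  simpa [abs_of_nonneg (mem_Ici.1 hs), abs_of_nonneg ((mem_Ici.1 hs).trans hst)] using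
    hφ.le_max_of_mem_Icc (mem_univ _) (mem_univ _) hmem

lemma convexOn_Ici_of_convexOn_comp_abs {φ : ℝ → ℝ} (hφ : ConvexOn ℝ univ (φ ∘ abs)) :
    ConvexOn ℝ (Ici 0) φ :=
  (hφ.subset (subset_univ _) (convex_Ici 0)).congr fun _ hx => by
    simp [abs_of_nonneg (mem_Ici.1 hx)]

lemma sqrt_sub_inv_sqrt_eq {t : ℝ} (ht : 2 ≤ t) :
    √((t + √(t ^ 2 - 4)) / 2) - 1 / √((t + √(t ^ 2 - 4)) / 2) = √(t - 2) := by
  set s := √(t ^ 2 - 4)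
  set l := √((t + s) / 2)
  have hs : 0 ≤ s := Real.sqrt_nonneg _
  have hs_sq : s ^ 2 = t ^ 2 - 4 := Real.sq_sqrt (by nlinarith)
  have hl : 0 < l := Real.sqrt_pos.2 (by positivity)
  have hl_sq : l ^ 2 = (t + s) / 2 := Real.sq_sqrt (by positivity)
  have hl_one : 1 ≤ l := by nlinarith
  have hdiff : 0 ≤ l - 1 / l := by
    rw [sub_nonneg, div_le_iff₀ hl]; nlinarith
  have hdiff_sq : (l - 1 / l) ^ 2 = t - 2 := by
    field_simp
    nlinarith
  rw [← hdiff_sq, Real.sqrt_sq hdiff]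

lemma ConvexEReal.convexOn_of_comp_affineMap {P : Matrix (Fin 2) (Fin 2) ℝ × ℝ → EReal}
    (hP : ConvexEReal P) {E : Type*} [AddCommGroup E] [Module ℝ E]
    (A : E →ᵃ[ℝ] Matrix (Fin 2) (Fin 2) ℝ × ℝ) {g : E → ℝ} (hg : ∀ x, P (A x) = g x) :
    ConvexOn ℝ univ g := by
  refine ⟨convex_univ, fun x _ y _ a b ha hb hab => ?_⟩
  have h := hP (A x) (A y) a b ha hb hab
  rwa [← Convex.combo_affine_apply hab, hg, hg, hg, ← EReal.coe_mul, ← EReal.coe_mul,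
    ← EReal.coe_add, EReal.coe_le_coe_iff] at h

lemma convexEReal_ite_top {s : Set (Matrix (Fin 2) (Fin 2) ℝ × ℝ)} [DecidablePred (· ∈ s)]
    {f : Matrix (Fin 2) (Fin 2) ℝ × ℝ → ℝ} (hf : ConvexOn ℝ s f) :
    ConvexEReal fun p => if p ∈ s then (f p : EReal) else ⊤ := by
  intro x y a b ha hb hab
  dsimp only
  rcases ha.eq_or_lt with rfl | ha
  · obtain rfl : b = 1 := by linarith
    simp
  rcases hb.eq_or_lt with rfl | hb
  · obtain rfl : a = 1 := by linarith
    simp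
  by_cases hx : x ∈ s
  · by_cases hy : y ∈ s
    · simp only [if_pos hx, if_pos hy, if_pos (hf.1 hx hy ha.le hb.le hab), ← EReal.coe_mul,
        ← EReal.coe_add, EReal.coe_le_coe_iff]
      exact hf.2 hx hy ha.le hb.le hab
    · rw [if_neg hy, EReal.coe_mul_top_of_pos hb, if_pos hx, ← EReal.coe_mul,
        EReal.add_top_of_ne_bot (EReal.coe_ne_bot _)]
      exact le_top
  · rw [if_neg hx, EReal.coe_mul_top_of_pos ha, EReal.top_add_of_ne_bot]
    · exact le_top
    · split_ifs
      · exact EReal.coe_mul _ _ ▸ EReal.coe_ne_bot _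
      · rw [EReal.coe_mul_top_of_pos hb]; exact top_ne_bot

-- Twice the coordinates of the anticonformal part `!![c, d; d, -c]` of `F`.
def anticonformalPart : Matrix (Fin 2) (Fin 2) ℝ →ₗ[ℝ] EuclideanSpace ℝ (Fin 2) where
  toFun F := !₂[F 0 0 - F 1 1, F 0 1 + F 1 0]
  map_add' F G := by
    ext i
    fin_cases i <;>
      simp only [Fin.zero_eta, Fin.mk_one, cons_val_zero, cons_val_one, cons_val_fin_one,
        Matrix.add_apply, PiLp.add_apply] <;> ring
  map_smul' c F := by
    ext i
    fin_cases i <;>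
      simp only [Fin.zero_eta, Fin.mk_one, cons_val_zero, cons_val_one, cons_val_fin_one,
        Matrix.smul_apply, PiLp.smul_apply, smul_eq_mul, RingHom.id_apply] <;> ring

lemma norm_anticonformalPart_sq (F : Matrix (Fin 2) (Fin 2) ℝ) :
    ‖anticonformalPart F‖ ^ 2 = (Fᵀ * F).trace - 2 * F.det := by
  simp only [anticonformalPart, LinearMap.coe_mk, AddHom.coe_mk,
    EuclideanSpace.real_norm_sq_eq, Fin.sum_univ_two, cons_val_zero, cons_val_one,
    cons_val_fin_one, trace_fin_two, Matrix.mul_apply, transpose_apply, det_fin_two]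
  ring

theorem lambdaMax_sub_inv_eq_norm_anticonformalPart {F : Matrix (Fin 2) (Fin 2) ℝ}
    (hF : F.det = 1) : lambdaMax F - 1 / lambdaMax F = ‖anticonformalPart F‖ := by
  have htr := norm_anticonformalPart_sq F
  rw [hF, mul_one] at htr
  have hdet : (Fᵀ * F).det = 1 := by rw [Matrix.det_mul, Matrix.det_transpose, hF, one_mul]
  have ht : 2 ≤ (Fᵀ * F).trace := by nlinarith [norm_nonneg (anticonformalPart F)]
  rw [lambdaMax, hdet, mul_one, sqrt_sub_inv_sqrt_eq ht, ← htr, Real.sqrt_sq (norm_nonneg _)]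

def shear : ℝ →ᵃ[ℝ] Matrix (Fin 2) (Fin 2) ℝ × ℝ :=
  AffineMap.lineMap (1, 1) (!![1, 1; 0, 1], 1)

lemma shear_apply (t : ℝ) : shear t = (!![1, t; 0, 1], 1) := by
  ext i j
  · fin_cases i <;> fin_cases j <;> simp [shear, AffineMap.lineMap_apply_module]
  · simp [shear, AffineMap.lineMap_apply_module]

theorem polyconvex_iff_phi_monotone_convex_general
    (W : Matrix (Fin 2) (Fin 2) ℝ → ℝ)
    (φ : ℝ → ℝ)
    (hφ : ∀ F : Matrix (Fin 2) (Fin 2) ℝ, F.det = 1 →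
      W F = φ (lambdaMax F - 1 / lambdaMax F)) :
    PolyconvexSL W ↔ MonotoneOn φ (Set.Ici 0) ∧ ConvexOn ℝ (Set.Ici 0) φ := by
  have hWφ (F : Matrix (Fin 2) (Fin 2) ℝ) (hF : F.det = 1) : W F = φ ‖anticonformalPart F‖ := by
    rw [hφ F hF, lambdaMax_sub_inv_eq_norm_anticonformalPart hF]
  constructor
  · rintro ⟨P, hP, hPW⟩
    have hφ_abs : ConvexOn ℝ univ (φ ∘ abs) := hP.convexOn_of_comp_affineMap shear fun t => by
      have hdet : (!![1, t; 0, 1] : Matrix (Fin 2) (Fin 2) ℝ).det = 1 := by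
        simp [Matrix.det_fin_two_of]
      have h := hPW !![1, t; 0, 1]
      rw [hdet, if_pos rfl, hWφ _ hdet] at h
      simp [shear_apply, ← h, anticonformalPart, EuclideanSpace.norm_eq, Real.sqrt_sq_eq_abs]
    exact ⟨monotoneOn_Ici_of_convexOn_comp_abs hφ_abs, convexOn_Ici_of_convexOn_comp_abs hφ_abs⟩
  · rintro ⟨hmono, hconv⟩
    have hf : ConvexOn ℝ {p : Matrix (Fin 2) (Fin 2) ℝ × ℝ | p.2 = 1}
        fun p => φ ‖anticonformalPart p.1‖ :=
      (hconv.comp_of_monotoneOn hmono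
        ((convexOn_norm convex_univ).comp_linearMap (anticonformalPart ∘ₗ LinearMap.fst ℝ _ ℝ))
        fun _ _ => norm_nonneg _).subset (subset_univ _)
        ((convex_singleton 1).linear_preimage (LinearMap.snd ℝ _ ℝ))
    refine ⟨_, convexEReal_ite_top hf, fun F => ?_⟩
    by_cases hF : F.det = 1
    · simp [hF, hWφ F hF]
    · simp [hF]

/-- **Mielke's polyconvexity criterion.** For objective and
isotropic `W : SL(2) → ℝ` with representing function `φ`
(`W(F) = φ(λmax(F) − 1/λmax(F))`), `W` is polyconvex iff `φ` is nondecreasing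
and convex on `[0,∞)`. -/
theorem polyconvex_iff_phi_monotone_convex
    (W : Matrix (Fin 2) (Fin 2) ℝ → ℝ)
    (hW : ∀ F : Matrix (Fin 2) (Fin 2) ℝ, F.det = 1 →
      ∀ Q₁ Q₂ : Matrix (Fin 2) (Fin 2) ℝ, Q₁ᵀ * Q₁ = 1 → Q₂ᵀ * Q₂ = 1 →
        W (Q₁ * F * Q₂) = W F)
    (φ : ℝ → ℝ)
    (hφ : ∀ F : Matrix (Fin 2) (Fin 2) ℝ, F.det = 1 →
      W F = φ (lambdaMax F - 1 / lambdaMax F)) :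
    PolyconvexSL W ↔ MonotoneOn φ (Set.Ici 0) ∧ ConvexOn ℝ (Set.Ici 0) φ :=
  polyconvex_iff_phi_monotone_convex_general W φ hφ
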